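/- arXiv:2112.04213 — 6 statements merged into one kernel-verified Lean document; each statement's English description precedes it below -/
import Mathlib

section
/- Let S and A be nonempty finite types, γ ∈ (0,1), and R_max ≥ 0. Let α : ℕ → S × A → ℝ with α_t(s,a) ∈ [0,1] for all t, s, a; let r : ℕ → S × A → ℝ with |r_t(s,a)| ≤ R_max for all t, s, a; and let σ : ℕ → S × A → S be arbitrary. Let Q : ℕ → S × A → ℝ satisfy Q_{t+1}(s,a) = (1 − α_t(s,a))·Q_t(s,a) + α_t(s,a)·(r_t(s,a) + γ · max_{a'} Q_t(σ_t(s,a), a')) for all t, s, a. Then for every t, max_{(s,a)} |Q_t(s,a)| ≤ max(max_{(s,a)} |Q_0(s,a)|, R_max/(1−γ)). Consequently, for any Q* : S × A → ℝ with max_{(s,a)} |Q*(s,a)| ≤ R_max/(1−γ), setting V_max = R_max/(1−γ) and D_0 = V_max + max(‖Q_0‖_∞, V_max), one has ‖Q_t − Q*‖_∞ ≤ D_0 for all t. -/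
/-- Boundedness of (abstract) Q-learning iterates: with learning rates in `[0,1]`,
rewards bounded by `R_max` and arbitrary next states, the iterates stay bounded by
`max(‖Q_0‖_∞, R_max/(1-γ))`, and hence within `D_0 = V_max + max(‖Q_0‖_∞, V_max)`
of any `Q*` with `‖Q*‖_∞ ≤ V_max := R_max/(1-γ)`. -/
theorem stmt_1 {S A : Type*} [Fintype S] [Fintype A] [Nonempty S] [Nonempty A]
    (γ : ℝ) (hγ0 : 0 < γ) (hγ1 : γ < 1)
    (Rmax : ℝ) (hRmax : 0 ≤ Rmax)
    (α : ℕ → S × A → ℝ) (hα : ∀ t sa, α t sa ∈ Set.Icc (0 : ℝ) 1)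
    (r : ℕ → S × A → ℝ) (hr : ∀ t sa, |r t sa| ≤ Rmax)
    (σ : ℕ → S × A → S)
    (Q : ℕ → S × A → ℝ)
    (hQ : ∀ t sa, Q (t + 1) sa =
      (1 - α t sa) * Q t sa + α t sa * (r t sa + γ * ⨆ a' : A, Q t (σ t sa, a'))) :
    (∀ t, (⨆ sa : S × A, |Q t sa|) ≤ max (⨆ sa : S × A, |Q 0 sa|) (Rmax / (1 - γ))) ∧
    (∀ Qstar : S × A → ℝ, (⨆ sa : S × A, |Qstar sa|) ≤ Rmax / (1 - γ) →
      ∀ t, (⨆ sa : S × A, |Q t sa - Qstar sa|) ≤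
        Rmax / (1 - γ) + max (⨆ sa : S × A, |Q 0 sa|) (Rmax / (1 - γ))) := by
  set M : ℝ := max (⨆ sa : S × A, |Q 0 sa|) (Rmax / (1 - γ)) with hM
  have h1γ : (0:ℝ) < 1 - γ := by linarith
  have hRM : Rmax ≤ (1 - γ) * M := by
    have : Rmax / (1 - γ) ≤ M := le_max_right _ _
    calc Rmax = (1 - γ) * (Rmax / (1 - γ)) := by field_simp
    _ ≤ (1 - γ) * M := by nlinarith
  have key : ∀ t sa, |Q t sa| ≤ M := by
    intro t
    induction t with
    | zero =>
      intro sa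
      exact le_trans (le_ciSup (Set.Finite.bddAbove (Set.finite_range (fun sa => |Q 0 sa|))) sa)
        (le_max_left _ _)
    | succ t ih =>
      intro sa
      have hsup : |⨆ a' : A, Q t (σ t sa, a')| ≤ M := by
        rw [abs_le]
        constructor
        · obtain ⟨a0⟩ := (inferInstance : Nonempty A)
          have := le_ciSup (Set.Finite.bddAbove (Set.finite_range (fun a' => Q t (σ t sa, a')))) a0
          have h2 := (abs_le.mp (ih (σ t sa, a0))).1
          linarith
        · exact ciSup_le fun a' => (abs_le.mp (ih (σ t sa, a'))).2
      obtain ⟨ha0, ha1⟩ := hα t sa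
      rw [hQ t sa]
      have habs : |(1 - α t sa) * Q t sa + α t sa * (r t sa + γ * ⨆ a' : A, Q t (σ t sa, a'))|
          ≤ (1 - α t sa) * |Q t sa| + α t sa * (|r t sa| + γ * |⨆ a' : A, Q t (σ t sa, a')|) := by
        calc _ ≤ |(1 - α t sa) * Q t sa| + |α t sa * (r t sa + γ * ⨆ a' : A, Q t (σ t sa, a'))| :=
              abs_add_le _ _
        _ = |1 - α t sa| * |Q t sa| + |α t sa| * |r t sa + γ * ⨆ a' : A, Q t (σ t sa, a')| := by
              rw [abs_mul, abs_mul]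
        _ ≤ (1 - α t sa) * |Q t sa| + α t sa * (|r t sa| + γ * |⨆ a' : A, Q t (σ t sa, a')|) := by
              rw [abs_of_nonneg (by linarith), abs_of_nonneg ha0]
              gcongr
              calc |r t sa + γ * ⨆ a' : A, Q t (σ t sa, a')|
                  ≤ |r t sa| + |γ * ⨆ a' : A, Q t (σ t sa, a')| := abs_add_le _ _
                _ = |r t sa| + γ * |⨆ a' : A, Q t (σ t sa, a')| := by
                    rw [abs_mul, abs_of_nonneg hγ0.le]
      refine habs.trans ?_
      have hQM := ih sa
      have hrM := hr t sa
      have step : (1 - α t sa) * |Q t sa| + α t sa * (|r t sa| + γ * |⨆ a' : A, Q t (σ t sa, a')|)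
          ≤ (1 - α t sa) * M + α t sa * (Rmax + γ * M) := by
        gcongr <;> linarith
      have : (1 - α t sa) * M + α t sa * (Rmax + γ * M) ≤ M := by nlinarith
      linarith
  constructor
  · intro t
    exact ciSup_le fun sa => key t sa
  · intro Qstar hQstar t
    refine ciSup_le fun sa => ?_
    have h1 : |Qstar sa| ≤ Rmax / (1 - γ) :=
      le_trans (le_ciSup (Set.Finite.bddAbove (Set.finite_range (fun sa => |Qstar sa|))) sa) hQstar
    calc |Q t sa - Qstar sa| ≤ |Q t sa| + |Qstar sa| := abs_sub _ _
    _ ≤ Rmax / (1 - γ) + M := by have := key t sa; linarith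
    _ = Rmax / (1 - γ) + M := rfl
end

section
/- Let γ ∈ (0,1), set ε = (1−γ)/2, let D > 0, and let t_k ≥ 1 be a natural number. Define Y : ℕ → ℝ on t ≥ t_k by Y(t_k) = D and Y(t+1) = (1 − 1/t)·Y(t) + (1/t)·γ·D for every t ≥ t_k. Then for every natural t > 3·t_k, Y(t) < (γ + 2ε/3)·D. -/
/-! With step size `1/t`, the gap `Y t - c` to the target `c` shrinks by the factor `(t - 1)/t`
at every step, so `(t - 1) * (Y t - c)` is conserved: `Y t - γD = (t_k - 1)(1 - γ)D / (t - 1)`,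
which is below `(1 - γ)D / 3 = (2ε/3)·D` once `t > 3 t_k`. -/

lemma mul_sub_succ_eq_of_step {Y : ℕ → ℝ} {c : ℝ} {t : ℕ} (ht : t ≠ 0)
    (hstep : Y (t + 1) = (1 - 1 / (t : ℝ)) * Y t + (1 / (t : ℝ)) * c) :
    (t : ℝ) * (Y (t + 1) - c) = ((t : ℝ) - 1) * (Y t - c) := by
  have ht' : (t : ℝ) ≠ 0 := Nat.cast_ne_zero.mpr ht
  rw [hstep]
  field_simp
  ring

lemma sub_one_mul_sub_eq_of_step {Y : ℕ → ℝ} {c : ℝ} {tk : ℕ} (htk : 1 ≤ tk)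
    (hstep : ∀ t, tk ≤ t → Y (t + 1) = (1 - 1 / (t : ℝ)) * Y t + (1 / (t : ℝ)) * c)
    {t : ℕ} (ht : tk ≤ t) :
    ((t : ℝ) - 1) * (Y t - c) = ((tk : ℝ) - 1) * (Y tk - c) := by
  induction t, ht using Nat.le_induction with
  | base => rfl
  | succ n hn ih =>
    rw [Nat.cast_succ, add_sub_cancel_right,
      mul_sub_succ_eq_of_step (by omega) (hstep n hn), ih]

theorem stmt_3_general (γ : ℝ) (hγ1 : γ < 1)
    (ε : ℝ) (hε : ε = (1 - γ) / 2)
    (D : ℝ) (hD : 0 < D)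
    (tk : ℕ) (htk : 1 ≤ tk)
    (Y : ℕ → ℝ) (hY0 : Y tk = D)
    (hYrec : ∀ t, tk ≤ t → Y (t + 1) = (1 - 1 / (t : ℝ)) * Y t + (1 / (t : ℝ)) * γ * D) :
    ∀ t, 3 * tk < t → Y t < (γ + 2 * ε / 3) * D := by
  intro t ht
  have hconserved : ((t : ℝ) - 1) * (Y t - γ * D) = ((tk : ℝ) - 1) * ((1 - γ) * D) := by
    rw [sub_one_mul_sub_eq_of_step htk (fun s hs => by rw [hYrec s hs, mul_assoc]) (by omega),
      hY0]
    ring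
  have htk' : (1 : ℝ) ≤ tk := by exact_mod_cast htk
  have htime : 3 * ((tk : ℝ) - 1) < (t : ℝ) - 1 := by
    have : (3 * tk : ℝ) < t := by exact_mod_cast ht
    linarith
  have hgap : 0 < (1 - γ) * D := mul_pos (by linarith) hD
  have hgap_lt : Y t - γ * D < (1 - γ) * D / 3 := by
    refine lt_of_mul_lt_mul_left ?_ (by linarith : (0 : ℝ) ≤ (t : ℝ) - 1)
    rw [hconserved]
    linarith [mul_lt_mul_of_pos_right htime hgap]
  rw [hε]
  linarith

/-- The deterministic error part drops below `(γ + 2ε/3)·D` (with `ε = (1-γ)/2`)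
after at most a tripling of the time: for all `t > 3·t_k`, `Y t < (γ + 2ε/3)·D`. -/
theorem stmt_3 (γ : ℝ) (hγ0 : 0 < γ) (hγ1 : γ < 1)
    (ε : ℝ) (hε : ε = (1 - γ) / 2)
    (D : ℝ) (hD : 0 < D)
    (tk : ℕ) (htk : 1 ≤ tk)
    (Y : ℕ → ℝ) (hY0 : Y tk = D)
    (hYrec : ∀ t, tk ≤ t → Y (t + 1) = (1 - 1 / (t : ℝ)) * Y t + (1 / (t : ℝ)) * γ * D) :
    ∀ t, 3 * tk < t → Y t < (γ + 2 * ε / 3) * D :=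
  stmt_3_general γ hγ1 ε hε D hD tk htk Y hY0 hYrec
end

section
/- Let α : ℕ → ℝ with α_t ∈ [0,1] for all t and ∑_t α_t = ∞ (the partial sums tend to infinity). Let w : ℕ → ℝ be a sequence with w_t → 0 as t → ∞, and let W : ℕ → ℝ satisfy W_0 = 0 and W_{t+1} = (1 − α_t)·W_t + α_t·w_t for all t. Then W_t → 0 as t → ∞. -/
/-- The accumulated-noise recursion `W_{t+1} = (1-α_t)W_t + α_t w_t` with `W_0 = 0`,
step sizes `α_t ∈ [0,1]` with divergent sums, and noise `w_t → 0`, satisfies `W_t → 0`. -/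
theorem stmt_8 (α : ℕ → ℝ) (hα : ∀ t, α t ∈ Set.Icc (0 : ℝ) 1)
    (hsum : Filter.Tendsto (fun n => ∑ i ∈ Finset.range n, α i) Filter.atTop Filter.atTop)
    (w : ℕ → ℝ) (hw : Filter.Tendsto w Filter.atTop (nhds 0))
    (W : ℕ → ℝ) (hW0 : W 0 = 0)
    (hWrec : ∀ t, W (t + 1) = (1 - α t) * W t + α t * w t) :
    Filter.Tendsto W Filter.atTop (nhds 0) := by
  rw [Metric.tendsto_atTop]
  intro ε hε
  rw [Metric.tendsto_atTop] at hw
  obtain ⟨N, hN⟩ := hw (ε / 2) (by linarith)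
  -- key bound by induction
  have key : ∀ t, N ≤ t → |W t| ≤ ε / 2 + |W N| * ∏ i ∈ Finset.Ico N t, (1 - α i) := by
    intro t ht
    induction t, ht using Nat.le_induction with
    | base => simp; linarith
    | succ t ht ih =>
      have hα0 := (hα t).1
      have hα1 := (hα t).2
      have hwt : |w t| ≤ ε / 2 := by
        have := hN t (le_trans ht (Nat.le_refl t) |>.trans (le_refl t))
        simp only [Real.dist_eq, sub_zero] at this
        exact le_of_lt (this)
      have hstep : |W (t + 1)| ≤ (1 - α t) * |W t| + α t * |w t| := by
        rw [hWrec t]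
        calc |(1 - α t) * W t + α t * w t| ≤ |(1 - α t) * W t| + |α t * w t| := abs_add_le _ _
          _ = (1 - α t) * |W t| + α t * |w t| := by
              rw [abs_mul, abs_mul, abs_of_nonneg (by linarith), abs_of_nonneg hα0]
      have hprodeq : ∏ i ∈ Finset.Ico N (t + 1), (1 - α i)
          = (∏ i ∈ Finset.Ico N t, (1 - α i)) * (1 - α t) := by
        rw [Finset.prod_Ico_succ_top ht]
      calc |W (t + 1)| ≤ (1 - α t) * |W t| + α t * |w t| := hstep
        _ ≤ (1 - α t) * (ε / 2 + |W N| * ∏ i ∈ Finset.Ico N t, (1 - α i)) + α t * (ε / 2) := by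
            apply add_le_add
            · exact mul_le_mul_of_nonneg_left ih (by linarith)
            · exact mul_le_mul_of_nonneg_left hwt hα0
        _ = ε / 2 + |W N| * ((∏ i ∈ Finset.Ico N t, (1 - α i)) * (1 - α t)) := by ring
        _ = ε / 2 + |W N| * ∏ i ∈ Finset.Ico N (t + 1), (1 - α i) := by rw [hprodeq]
  -- the product term tends to 0
  have hprodnn : ∀ t, 0 ≤ ∏ i ∈ Finset.Ico N t, (1 - α i) := by
    intro t
    apply Finset.prod_nonneg
    intro i _
    linarith [(hα i).2]
  have hprodle : ∀ t, N ≤ t → (∏ i ∈ Finset.Ico N t, (1 - α i))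
      ≤ Real.exp ((∑ i ∈ Finset.range N, α i) - ∑ i ∈ Finset.range t, α i) := by
    intro t ht
    have h1 : (∏ i ∈ Finset.Ico N t, (1 - α i)) ≤ ∏ i ∈ Finset.Ico N t, Real.exp (-(α i)) := by
      apply Finset.prod_le_prod
      · intro i _; linarith [(hα i).2]
      · intro i _
        have := Real.add_one_le_exp (-(α i))
        linarith
    rw [← Real.exp_sum] at h1
    have hs : (∑ i ∈ Finset.Ico N t, -(α i)) = (∑ i ∈ Finset.range N, α i) - ∑ i ∈ Finset.range t, α i := by
      rw [Finset.sum_neg_distrib, Finset.sum_Ico_eq_sub _ ht]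
      ring
    rwa [hs] at h1
  have hexp : Filter.Tendsto (fun t => |W N| * Real.exp ((∑ i ∈ Finset.range N, α i) - ∑ i ∈ Finset.range t, α i)) Filter.atTop (nhds 0) := by
    have : Filter.Tendsto (fun t => (∑ i ∈ Finset.range N, α i) - ∑ i ∈ Finset.range t, α i) Filter.atTop Filter.atBot :=
      Filter.tendsto_atBot_add_const_left Filter.atTop _ (Filter.tendsto_neg_atBot_iff.mpr hsum) |>.congr (by intro t; ring)
    have h2 := Real.tendsto_exp_atBot.comp this
    have h3 := h2.const_mul (|W N|)
    simpa using h3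
  rw [Metric.tendsto_atTop] at hexp
  obtain ⟨M, hM⟩ := hexp (ε / 2) (by linarith)
  refine ⟨max N M, fun t ht => ?_⟩
  have htN : N ≤ t := le_trans (le_max_left _ _) ht
  have htM : M ≤ t := le_trans (le_max_right _ _) ht
  have h1 := key t htN
  have h2 := hM t htM
  simp only [Real.dist_eq, sub_zero] at h2 ⊢
  have h3 : |W N| * (∏ i ∈ Finset.Ico N t, (1 - α i)) ≤ |W N| * Real.exp ((∑ i ∈ Finset.range N, α i) - ∑ i ∈ Finset.range t, α i) :=
    mul_le_mul_of_nonneg_left (hprodle t htN) (abs_nonneg _)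
  have h4 : |W N| * Real.exp ((∑ i ∈ Finset.range N, α i) - ∑ i ∈ Finset.range t, α i) < ε / 2 :=
    lt_of_abs_lt h2
  calc |W t| ≤ ε / 2 + |W N| * ∏ i ∈ Finset.Ico N t, (1 - α i) := h1
    _ < ε := by linarith
end

section
/- Let E be a nonempty finite type, γ ∈ (0,1), Q* : E → ℝ, and let H : (E → ℝ) → (E → ℝ) satisfy ‖H Q − Q*‖_∞ ≤ γ·‖Q − Q*‖_∞ for every Q : E → ℝ. Let α : ℕ → E → ℝ with α_t(e) ∈ [0,1] for all t, e and ∑_t α_t(e) = ∞ for every e, let w : ℕ → E → ℝ, and let Q : ℕ → E → ℝ satisfy Q_{t+1}(e) = (1 − α_t(e))·Q_t(e) + α_t(e)·(H(Q_t)(e) + w_t(e)) for all t, e. Suppose there is D_0 ≥ 0 with ‖Q_t − Q*‖_∞ ≤ D_0 for all t, and suppose that for every starting time τ and every e ∈ E, the restarted accumulated noise W^{(τ)} defined by W^{(τ)}_τ(e) = 0, W^{(τ)}_{t+1}(e) = (1 − α_t(e))·W^{(τ)}_t(e) + α_t(e)·w_t(e) for t ≥ τ, satisfies W^{(τ)}_t(e)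 → 0 as t → ∞. Then ‖Q_t − Q*‖_∞ → 0 as t → ∞; that is, Q_t converges to Q* in the supremum norm. -/
open Filter Finset

lemma myProdTendsto (α : ℕ → ℝ) (h01 : ∀ i, 0 ≤ α i ∧ α i ≤ 1)
    (hsum : Tendsto (fun n => ∑ i ∈ Finset.range n, α i) atTop atTop) (τ : ℕ) :
    Tendsto (fun n => ∏ i ∈ Finset.Ico τ n, (1 - α i)) atTop (nhds 0) := by
  apply squeeze_zero' (g := fun n => Real.exp (∑ i ∈ Finset.range τ, α i - ∑ i ∈ Finset.range n, α i))
  · exact Eventually.of_forall fun n =>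
      Finset.prod_nonneg fun i _ => by linarith [(h01 i).2]
  · filter_upwards [eventually_ge_atTop τ] with n hn
    have h1 : ∏ i ∈ Finset.Ico τ n, (1 - α i) ≤ ∏ i ∈ Finset.Ico τ n, Real.exp (-α i) :=
      Finset.prod_le_prod (fun i _ => by linarith [(h01 i).2])
        (fun i _ => by have := Real.add_one_le_exp (-α i); linarith)
    have h2 : ∏ i ∈ Finset.Ico τ n, Real.exp (-α i)
        = Real.exp (∑ i ∈ Finset.range τ, α i - ∑ i ∈ Finset.range n, α i) := by
      rw [← Real.exp_sum]
      congr 1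
      rw [Finset.sum_neg_distrib, Finset.sum_Ico_eq_sub _ hn]
      ring
    linarith [h2 ▸ h1]
  · have : Tendsto (fun n => ∑ i ∈ Finset.range τ, α i - ∑ i ∈ Finset.range n, α i) atTop atBot := by
      apply tendsto_atBot_add_const_left
      exact tendsto_neg_atBot_iff.mpr hsum
    exact Real.tendsto_exp_atBot.comp this

def auxW {E : Type*} (α w : ℕ → E → ℝ) (τ : ℕ) : ℕ → E → ℝ
  | 0 => fun _ => 0
  | (t+1) => fun e => if t < τ then 0 else (1 - α t e) * auxW α w τ t e + α t e * w t e

/-- Asymptotic convergence of the iterative stochastic algorithm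
`Q_{t+1} = (1-α_t)Q_t + α_t(HQ_t + w_t)` around a maximum-norm pseudo-contraction `H`
toward `Q*`: if the iterates are bounded and all restarted accumulated-noise processes
vanish in the limit, then `‖Q_t − Q*‖_∞ → 0`. -/
theorem stmt_10 {E : Type*} [Fintype E] [Nonempty E]
    (γ : ℝ) (hγ0 : 0 < γ) (hγ1 : γ < 1)
    (Qstar : E → ℝ) (H : (E → ℝ) → (E → ℝ))
    (hH : ∀ Q : E → ℝ, (⨆ e, |H Q e - Qstar e|) ≤ γ * ⨆ e, |Q e - Qstar e|)
    (α : ℕ → E → ℝ) (hα : ∀ t e, α t e ∈ Set.Icc (0 : ℝ) 1)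
    (hαsum : ∀ e, Filter.Tendsto (fun n => ∑ i ∈ Finset.range n, α i e)
      Filter.atTop Filter.atTop)
    (w : ℕ → E → ℝ)
    (Q : ℕ → E → ℝ)
    (hQ : ∀ t e, Q (t + 1) e = (1 - α t e) * Q t e + α t e * (H (Q t) e + w t e))
    (D0 : ℝ) (hD0 : 0 ≤ D0)
    (hbound : ∀ t, (⨆ e, |Q t e - Qstar e|) ≤ D0)
    (hW : ∀ (τ : ℕ) (W : ℕ → E → ℝ),
      (∀ e, W τ e = 0) →
      (∀ t, τ ≤ t → ∀ e, W (t + 1) e = (1 - α t e) * W t e + α t e * w t e) →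
      ∀ e, Filter.Tendsto (fun t => W t e) Filter.atTop (nhds 0)) :
    Filter.Tendsto (fun t => ⨆ e, |Q t e - Qstar e|) Filter.atTop (nhds 0) := by
  have hbdd : ∀ t, BddAbove (Set.range fun e => |Q t e - Qstar e|) :=
    fun t => Set.Finite.bddAbove (Set.finite_range _)
  have hsupnn : ∀ t, 0 ≤ ⨆ e, |Q t e - Qstar e| := by
    intro t
    obtain ⟨e⟩ := ‹Nonempty E›
    exact le_trans (abs_nonneg _) (le_ciSup (hbdd t) e)
  -- the contraction step
  have hstep : ∀ D : ℝ, 0 < D → (∃ τ, ∀ t, τ ≤ t → (⨆ e, |Q t e - Qstar e|) ≤ D) →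
      ∃ τ, ∀ t, τ ≤ t → (⨆ e, |Q t e - Qstar e|) ≤ (1 + γ) / 2 * D := by
    intro D hD ⟨τ, hτ⟩
    set W := auxW α w τ with hWdef
    have hW0 : ∀ e, W τ e = 0 := by
      intro e
      cases τ with
      | zero => rfl
      | succ s => simp [hWdef, auxW]
    have hWrec : ∀ t, τ ≤ t → ∀ e, W (t + 1) e = (1 - α t e) * W t e + α t e * w t e := by
      intro t ht e
      simp [hWdef, auxW, Nat.not_lt.2 ht]
    have hWt := hW τ W hW0 hWrec
    -- key pointwise inequality
    have key : ∀ e, ∀ t, τ ≤ t →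
        |Q t e - Qstar e - W t e| ≤ γ * D + (1 - γ) * D * ∏ i ∈ Finset.Ico τ t, (1 - α i e) := by
      intro e
      refine Nat.le_induction ?_ ?_
      · simp [hW0 e, Finset.Ico_self]
        have := le_trans (le_ciSup (hbdd τ) e) (hτ τ le_rfl)
        linarith
      · intro t ht IH
        have ha0 := (hα t e).1
        have ha1 := (hα t e).2
        have hZ : Q (t+1) e - Qstar e - W (t+1) e
            = (1 - α t e) * (Q t e - Qstar e - W t e) + α t e * (H (Q t) e - Qstar e) := by
          rw [hQ t e, hWrec t ht e]; ring
        have hHb : |H (Q t) e - Qstar e| ≤ γ * D := by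
          have h1 : |H (Q t) e - Qstar e| ≤ ⨆ e', |H (Q t) e' - Qstar e'| :=
            le_ciSup (f := fun e' => |H (Q t) e' - Qstar e'|)
              (Set.Finite.bddAbove (Set.finite_range _)) e
          have h2 := hH (Q t)
          have h3 : γ * (⨆ e, |Q t e - Qstar e|) ≤ γ * D :=
            mul_le_mul_of_nonneg_left (hτ t ht) hγ0.le
          linarith
        have habs : |Q (t+1) e - Qstar e - W (t+1) e|
            ≤ (1 - α t e) * |Q t e - Qstar e - W t e| + α t e * |H (Q t) e - Qstar e| := by
          rw [hZ]
          calc _ ≤ |(1 - α t e) * (Q t e - Qstar e - W t e)| + |α t e * (H (Q t) e - Qstar e)| :=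
                abs_add_le _ _
            _ = (1 - α t e) * |Q t e - Qstar e - W t e| + α t e * |H (Q t) e - Qstar e| := by
                rw [abs_mul, abs_mul, abs_of_nonneg (by linarith : (0:ℝ) ≤ 1 - α t e),
                  abs_of_nonneg ha0]
        have hP : ∏ i ∈ Finset.Ico τ (t+1), (1 - α i e)
            = (∏ i ∈ Finset.Ico τ t, (1 - α i e)) * (1 - α t e) :=
          Finset.prod_Ico_succ_top ht _
        have hPnn : 0 ≤ ∏ i ∈ Finset.Ico τ t, (1 - α i e) :=
          Finset.prod_nonneg fun i _ => by linarith [(hα i e).2]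
        rw [hP]
        nlinarith [mul_le_mul_of_nonneg_left IH (by linarith : (0:ℝ) ≤ 1 - α t e),
          mul_le_mul_of_nonneg_left hHb ha0]
    -- pointwise eventual bound
    have perE : ∀ e, ∀ᶠ t in atTop, |Q t e - Qstar e| ≤ (1 + γ) / 2 * D := by
      intro e
      have hlim : Tendsto (fun t => γ * D + (1 - γ) * D * ∏ i ∈ Finset.Ico τ t, (1 - α i e)
          + |W t e|) atTop (nhds (γ * D + (1 - γ) * D * 0 + |(0:ℝ)|)) := by
        refine Tendsto.add (Tendsto.add tendsto_const_nhds ?_) ?_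
        · exact (myProdTendsto (fun i => α i e) (fun i => ⟨(hα i e).1, (hα i e).2⟩)
            (hαsum e) τ).const_mul _
        · exact (hWt e).abs
      simp only [mul_zero, add_zero, abs_zero] at hlim
      have hev : ∀ᶠ t in atTop, γ * D + (1 - γ) * D * ∏ i ∈ Finset.Ico τ t, (1 - α i e)
          + |W t e| < (1 + γ) / 2 * D :=
        hlim.eventually_lt_const (by nlinarith)
      filter_upwards [hev, eventually_ge_atTop τ] with t h1 h2
      have := key e t h2
      have htri : |Q t e - Qstar e| ≤ |Q t e - Qstar e - W t e| + |W t e| := by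
        have := abs_add_le (Q t e - Qstar e - W t e) (W t e)
        simpa using this
      linarith
    have hall : ∀ᶠ t in atTop, ∀ e, |Q t e - Qstar e| ≤ (1 + γ) / 2 * D :=
      eventually_all.2 perE
    have hsup : ∀ᶠ t in atTop, (⨆ e, |Q t e - Qstar e|) ≤ (1 + γ) / 2 * D := by
      filter_upwards [hall] with t ht
      exact ciSup_le ht
    exact eventually_atTop.1 hsup
  -- iterate
  rcases eq_or_lt_of_le hD0 with hD0' | hD0'
  · have hzero : ∀ t, (⨆ e, |Q t e - Qstar e|) = 0 :=
      fun t => le_antisymm (hD0' ▸ hbound t) (hsupnn t)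
    simp only [hzero]; exact tendsto_const_nhds
  · have hiter : ∀ k : ℕ, ∃ τ, ∀ t, τ ≤ t →
        (⨆ e, |Q t e - Qstar e|) ≤ ((1 + γ) / 2) ^ k * D0 := by
      intro k
      induction k with
      | zero => exact ⟨0, fun t _ => by simpa using hbound t⟩
      | succ n IH =>
        have hpos : 0 < ((1 + γ) / 2) ^ n * D0 :=
          mul_pos (pow_pos (by linarith) n) hD0'
        obtain ⟨τ, hτ⟩ := hstep _ hpos IH
        exact ⟨τ, fun t ht => by
          have := hτ t ht
          calc (⨆ e, |Q t e - Qstar e|) ≤ (1 + γ) / 2 * (((1 + γ) / 2) ^ n * D0) := this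
            _ = ((1 + γ) / 2) ^ (n + 1) * D0 := by ring⟩
    rw [tendsto_order]
    constructor
    · intro a ha
      exact Eventually.of_forall fun t => lt_of_lt_of_le ha (hsupnn t)
    · intro a ha
      have hd : Tendsto (fun k : ℕ => ((1 + γ) / 2) ^ k * D0) atTop (nhds 0) := by
        have := tendsto_pow_atTop_nhds_zero_of_lt_one (by linarith : (0:ℝ) ≤ (1 + γ) / 2)
          (by linarith : (1 + γ) / 2 < 1)
        simpa using this.mul_const D0
      obtain ⟨k, hk⟩ := (hd.eventually_lt_const ha).exists
      obtain ⟨τ, hτ⟩ := hiter k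
      filter_upwards [eventually_ge_atTop τ] with t ht
      exact lt_of_le_of_lt (hτ t ht) hk
end

section
/- Let E be a nonempty finite type, γ ∈ (0,1), ε = (1−γ)/2, Q* : E → ℝ, and let H : (E → ℝ) → (E → ℝ) satisfy ‖H Q − Q*‖_∞ ≤ γ·‖Q − Q*‖_∞ for every Q : E → ℝ. Let w : ℕ → E → ℝ and let Q : ℕ → E → ℝ satisfy, for every natural t ≥ 1 and every e, Q_{t+1}(e) = (1 − 1/t)·Q_t(e) + (1/t)·(H(Q_t)(e) + w_t(e)). Let D_0 ≥ 0 satisfy ‖Q_t − Q*‖_∞ ≤ D_0 for all t ≥ 1, let t_0 ≥ 1 be a natural number, and set t_k = 3^k · t_0 and D_k = (γ + ε)^k · D_0. For each k, define the restarted noise W^{(k)} by W^{(k)}_{t_k}(e) = 0 and W^{(k)}_{t+1}(e) = (1 − 1/t)·W^{(k)}_t(e) + (1/t)·w_t(e) for t ≥ t_k, and assume that for every k and every t ≥ t_{k+1} = 3·t_k and every e, |W^{(k)}_t(e)| ≤ (ε/3)·D_k. Then for every k and every t ≥ t_k = 3^k·t_0, ‖Q_t − Q*‖_∞ ≤ D_k.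 In particular, for any ε_1 > 0 and any natural N ≥ (2/(1−γ))·log(D_0/ε_1), ‖Q_t − Q*‖_∞ ≤ ε_1 for all t ≥ 3^N·t_0. -/
/-!
Put `X_t = Q_t − Q* − W^{(k)}_t`. The noise cancels from the recursion for `X`, which becomes
an average of `X_t` and `H Q_t − Q*`; the latter is at most `γ D_k` once `‖Q_t − Q*‖_∞ ≤ D_k`.
With step `1/t`, the excess of `|X_t|` over `γ D_k` decays like `t_k / t`, so by time
`3 t_k` it is at most `(1 − γ) D_k / 3`. Adding the noise bound `(ε/3) D_k` gives
`‖Q_t − Q*‖_∞ ≤ (γ + ε) D_k = D_{k+1}`, and induction on `k` finishes the first claim. The second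
follows from `γ + ε = 1 − ε ≤ exp (−ε)`.
-/

open Real

theorem le_mul_div_of_le_one_sub_inv_mul {v : ℕ → ℝ} {s : ℕ} {d : ℝ} (hs : 1 ≤ s) (hd : 0 ≤ d)
    (hvs : v s ≤ d) (hv : ∀ t, s ≤ t → v (t + 1) ≤ (1 - 1 / (t : ℝ)) * v t) :
    ∀ t, s ≤ t → v t ≤ d * s / t := by
  intro t ht
  induction t, ht using Nat.le_induction with
  | base =>
    have : (s : ℝ) ≠ 0 := by positivity
    rwa [mul_div_cancel_right₀ _ this]
  | succ t ht ih =>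
    have ht1 : (1 : ℝ) ≤ t := by exact_mod_cast hs.trans ht
    have hfactor : 0 ≤ 1 - 1 / (t : ℝ) := sub_nonneg.2 (div_le_one_of_le₀ ht1 (by linarith))
    calc v (t + 1) ≤ (1 - 1 / (t : ℝ)) * v t := hv t ht
      _ ≤ (1 - 1 / (t : ℝ)) * (d * s / t) := mul_le_mul_of_nonneg_left ih hfactor
      _ = d * s * ((t - 1) / t ^ 2) := by field_simp
      _ ≤ d * s * (1 / (t + 1)) := by
        refine mul_le_mul_of_nonneg_left ?_ (by positivity)
        rw [div_le_div_iff₀ (by positivity) (by positivity)]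
        nlinarith
      _ = d * s / ((t + 1 : ℕ) : ℝ) := by push_cast; ring

/-- The restarted noise `W^{(k)}` with `s = t_k`, extended by `0` before time `s`. -/
noncomputable def restartedNoise {E : Type*} (w : ℕ → E → ℝ) (s : ℕ) : ℕ → E → ℝ
  | 0 => 0
  | t + 1 => fun e =>
      if s ≤ t then (1 - 1 / (t : ℝ)) * restartedNoise w s t e + (1 / (t : ℝ)) * w t e else 0

section restartedNoise

variable {E : Type*} (w : ℕ → E → ℝ) {s t : ℕ}

theorem restartedNoise_of_le (h : t ≤ s) (e : E) : restartedNoise w s t e = 0 := by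
  cases t with
  | zero => rfl
  | succ t => simp only [restartedNoise, if_neg (by omega : ¬s ≤ t)]

theorem restartedNoise_succ (h : s ≤ t) (e : E) :
    restartedNoise w s (t + 1) e =
      (1 - 1 / (t : ℝ)) * restartedNoise w s t e + (1 / (t : ℝ)) * w t e := by
  simp only [restartedNoise, if_pos h]

end restartedNoise

section stage

variable {E : Type*} [Finite E] {γ D : ℝ} {Qstar : E → ℝ} {H : (E → ℝ) → (E → ℝ)}
  {w Q W : ℕ → E → ℝ} {s : ℕ}

theorem abs_sub_sub_noise_le (hγ0 : 0 ≤ γ) (hγ1 : γ ≤ 1) (hD : 0 ≤ D)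
    (hH : ∀ Q : E → ℝ, (⨆ e, |H Q e - Qstar e|) ≤ γ * ⨆ e, |Q e - Qstar e|)
    (hQ : ∀ t, 1 ≤ t → ∀ e, Q (t + 1) e =
      (1 - 1 / (t : ℝ)) * Q t e + (1 / (t : ℝ)) * (H (Q t) e + w t e))
    (hs : 1 ≤ s) (hW0 : ∀ e, W s e = 0)
    (hW : ∀ t, s ≤ t → ∀ e, W (t + 1) e = (1 - 1 / (t : ℝ)) * W t e + (1 / (t : ℝ)) * w t e)
    (hQD : ∀ t, s ≤ t → (⨆ e, |Q t e - Qstar e|) ≤ D) :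
    ∀ t, s ≤ t → ∀ e, |Q t e - Qstar e - W t e| ≤ γ * D + (1 - γ) * D * (s / t) := by
  intro t ht e
  have hdev := le_mul_div_of_le_one_sub_inv_mul
    (v := fun t => |Q t e - Qstar e - W t e| - γ * D) (d := (1 - γ) * D) hs
    (mul_nonneg (by linarith) hD) ?_ ?_ t ht
  · rw [mul_div_assoc] at hdev
    linarith
  · have := (le_ciSup (Finite.bddAbove_range fun e => |Q s e - Qstar e|) e).trans (hQD s le_rfl)
    simp only [hW0, sub_zero]
    linarith
  · intro t ht
    have ht1 : (1 : ℝ) ≤ t := by exact_mod_cast hs.trans ht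
    have hstep : 0 ≤ 1 / (t : ℝ) := by positivity
    have hfactor : 0 ≤ 1 - 1 / (t : ℝ) := sub_nonneg.2 (div_le_one_of_le₀ ht1 (by linarith))
    have hHQ : |H (Q t) e - Qstar e| ≤ γ * D :=
      (le_ciSup (Finite.bddAbove_range fun e => |H (Q t) e - Qstar e|) e).trans
        ((hH (Q t)).trans (mul_le_mul_of_nonneg_left (hQD t ht) hγ0))
    have hrec : Q (t + 1) e - Qstar e - W (t + 1) e =
        (1 - 1 / (t : ℝ)) * (Q t e - Qstar e - W t e) + 1 / (t : ℝ) * (H (Q t) e - Qstar e) := by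
      rw [hQ t (by omega) e, hW t ht e]; ring
    have : |Q (t + 1) e - Qstar e - W (t + 1) e| ≤
        (1 - 1 / (t : ℝ)) * |Q t e - Qstar e - W t e| + 1 / (t : ℝ) * (γ * D) := by
      rw [hrec]
      refine (abs_add_le _ _).trans ?_
      rw [abs_mul, abs_mul, abs_of_nonneg hfactor, abs_of_nonneg hstep]
      gcongr
    linarith

theorem iSup_abs_sub_le_of_noise_le [Nonempty E] {ε : ℝ} (hε : ε = (1 - γ) / 2)
    (hγ0 : 0 ≤ γ) (hγ1 : γ ≤ 1) (hD : 0 ≤ D)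
    (hH : ∀ Q : E → ℝ, (⨆ e, |H Q e - Qstar e|) ≤ γ * ⨆ e, |Q e - Qstar e|)
    (hQ : ∀ t, 1 ≤ t → ∀ e, Q (t + 1) e =
      (1 - 1 / (t : ℝ)) * Q t e + (1 / (t : ℝ)) * (H (Q t) e + w t e))
    (hs : 1 ≤ s) (hW0 : ∀ e, W s e = 0)
    (hW : ∀ t, s ≤ t → ∀ e, W (t + 1) e = (1 - 1 / (t : ℝ)) * W t e + (1 / (t : ℝ)) * w t e)
    (hQD : ∀ t, s ≤ t → (⨆ e, |Q t e - Qstar e|) ≤ D)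
    (hWD : ∀ t, 3 * s ≤ t → ∀ e, |W t e| ≤ (ε / 3) * D) :
    ∀ t, 3 * s ≤ t → (⨆ e, |Q t e - Qstar e|) ≤ (γ + ε) * D := by
  intro t ht
  refine ciSup_le fun e => ?_
  have hdev := abs_sub_sub_noise_le hγ0 hγ1 hD hH hQ hs hW0 hW hQD t (by omega) e
  have hratio : (s : ℝ) / t ≤ 1 / 3 := by
    have h3s : (3 * s : ℝ) ≤ t := by exact_mod_cast ht
    have hs1 : (1 : ℝ) ≤ s := by exact_mod_cast hs
    rw [div_le_iff₀ (by linarith)]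
    linarith
  have : (1 - γ) * D * (s / t) ≤ (1 - γ) * D * (1 / 3) :=
    mul_le_mul_of_nonneg_left hratio (mul_nonneg (by linarith) hD)
  have := abs_sub_abs_le_abs_sub (Q t e - Qstar e) (W t e)
  have := hWD t ht e
  subst hε
  linarith

end stage

theorem one_sub_pow_mul_le_of_log_div_le {c D ε₁ : ℝ} {N : ℕ} (hc : c ≤ 1) (hD : 0 ≤ D)
    (hε₁ : 0 < ε₁) (hN : log (D / ε₁) ≤ c * N) : (1 - c) ^ N * D ≤ ε₁ := by
  rcases hD.eq_or_lt with rfl | hD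
  · simpa using hε₁.le
  calc (1 - c) ^ N * D ≤ exp (-c) ^ N * D := by
        gcongr
        linarith [add_one_le_exp (-c)]
    _ = exp (-(c * N)) * D := by rw [← exp_nat_mul]; ring_nf
    _ ≤ exp (-log (D / ε₁)) * D := by gcongr
    _ = ε₁ := by rw [exp_neg, exp_log (by positivity)]; field_simp

/-- Deterministic core of the finite-time convergence rate for synchronous Q-learning
with replay and linear learning rate `α_t = 1/t`: with stage times `t_k = 3^k t_0` and
distance bounds `D_k = (γ+ε)^k D_0`, `ε = (1-γ)/2`, if every restarted accumulated
noise is bounded by `(ε/3)·D_k` from time `3^{k+1} t_0` onwards, then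
`‖Q_t − Q*‖_∞ ≤ D_k` for all `t ≥ 3^k t_0`; in particular `‖Q_t − Q*‖_∞ ≤ ε_1` for all
`t ≥ 3^N t_0` once `N ≥ (2/(1-γ))·log(D_0/ε_1)`. -/
theorem stmt_11 {E : Type*} [Fintype E] [Nonempty E]
    (γ : ℝ) (hγ0 : 0 < γ) (hγ1 : γ < 1)
    (ε : ℝ) (hε : ε = (1 - γ) / 2)
    (Qstar : E → ℝ) (H : (E → ℝ) → (E → ℝ))
    (hH : ∀ Q : E → ℝ, (⨆ e, |H Q e - Qstar e|) ≤ γ * ⨆ e, |Q e - Qstar e|)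
    (w : ℕ → E → ℝ)
    (Q : ℕ → E → ℝ)
    (hQ : ∀ t, 1 ≤ t → ∀ e, Q (t + 1) e =
      (1 - 1 / (t : ℝ)) * Q t e + (1 / (t : ℝ)) * (H (Q t) e + w t e))
    (D0 : ℝ) (hD0 : 0 ≤ D0)
    (hbound : ∀ t, 1 ≤ t → (⨆ e, |Q t e - Qstar e|) ≤ D0)
    (t0 : ℕ) (ht0 : 1 ≤ t0)
    (hW : ∀ (k : ℕ) (W : ℕ → E → ℝ),
      (∀ e, W (3 ^ k * t0) e = 0) →
      (∀ t, 3 ^ k * t0 ≤ t → ∀ e,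
        W (t + 1) e = (1 - 1 / (t : ℝ)) * W t e + (1 / (t : ℝ)) * w t e) →
      ∀ t, 3 ^ (k + 1) * t0 ≤ t → ∀ e,
        |W t e| ≤ (ε / 3) * ((γ + ε) ^ k * D0)) :
    (∀ k : ℕ, ∀ t, 3 ^ k * t0 ≤ t →
      (⨆ e, |Q t e - Qstar e|) ≤ (γ + ε) ^ k * D0) ∧
    (∀ ε1 : ℝ, 0 < ε1 → ∀ N : ℕ,
      (2 / (1 - γ)) * Real.log (D0 / ε1) ≤ (N : ℝ) →
      ∀ t, 3 ^ N * t0 ≤ t → (⨆ e, |Q t e - Qstar e|) ≤ ε1) := by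
  have hstage : ∀ k, ∀ t, 3 ^ k * t0 ≤ t → (⨆ e, |Q t e - Qstar e|) ≤ (γ + ε) ^ k * D0 := by
    intro k
    induction k with
    | zero => simpa using fun t ht => hbound t (ht0.trans ht)
    | succ k ih =>
      have hs : 1 ≤ 3 ^ k * t0 := Nat.one_le_iff_ne_zero.mpr (by positivity)
      have hnext : 3 ^ (k + 1) * t0 = 3 * (3 ^ k * t0) := by ring
      set s := 3 ^ k * t0
      have hW0 : ∀ e, restartedNoise w s s e = 0 := restartedNoise_of_le w le_rfl
      have hWrec := fun t (ht : s ≤ t) => restartedNoise_succ w ht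
      rw [hnext, pow_succ', mul_assoc]
      have hDk : 0 ≤ (γ + ε) ^ k * D0 := mul_nonneg (pow_nonneg (by rw [hε]; linarith) k) hD0
      exact iSup_abs_sub_le_of_noise_le hε hγ0.le hγ1.le hDk hH hQ hs hW0 hWrec ih
        (by simpa only [hnext] using hW k _ hW0 hWrec)
  refine ⟨hstage, fun ε₁ hε₁ N hN t ht => (hstage N t ht).trans ?_⟩
  rw [show γ + ε = 1 - ε by rw [hε]; ring]
  refine one_sub_pow_mul_le_of_log_div_le (by rw [hε]; linarith) hD0 hε₁ ?_
  rw [hε, ← div_le_iff₀' (by linarith)]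
  rwa [div_div_eq_mul_div, mul_comm, mul_div_right_comm]
end

section
/- Let (Ω, 𝓕, μ) be a probability space and (r_i)_{i≥1} a sequence of independent, identically distributed real-valued random variables with E[r_i] = R and |r_i| ≤ R_max almost surely, where R_max > 0. For a natural m ≥ 1 let r̄_m = (1/m)·∑_{i=1}^m r_i. Let c ∈ (0,1), let t ≥ 1 be a natural number with c·t ≥ 1, let ε > 0, and let A : Ω → ℕ be a random variable (not assumed independent of the r_i) with c·t ≤ A ≤ t almost surely. If moreover (1−c)·t + 1 ≤ exp(c·t·ε²/(4·R_max²)), then μ{ω : |r̄_{A(ω)}(ω) − R| > ε} ≤ 2·exp(−c·t·ε²/(4·R_max²)). -/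
/-!
For a fixed sample size `m ≥ c·t`, Hoeffding's lemma makes each centred `r_i` sub-Gaussian with
variance proxy `R_max²`, so Hoeffding's inequality bounds `P(|r̄_m − R| > ε)` by
`2·exp(−m ε²/(2 R_max²)) ≤ 2·exp(−c t ε²/(2 R_max²))`. The random size `A` almost surely takes one
of the at most `(1−c)·t + 1` values in `[c·t, t]`, and a union bound over these values needs no
independence between `A` and the `r_i`; absorbing the factor `(1−c)·t + 1 ≤ exp(c t ε²/(4 R_max²))`
halves the exponent.
-/

open MeasureTheory ProbabilityTheory Real
open scoped NNReal

lemma card_Icc_natCeil_le {x : ℝ} {n : ℕ} (hx : x ≤ n) :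
    ((Finset.Icc ⌈x⌉₊ n).card : ℝ) ≤ n - x + 1 := by
  have hceil : ⌈x⌉₊ ≤ n := Nat.ceil_le.mpr hx
  rw [Nat.card_Icc, Nat.cast_sub (by omega)]
  push_cast
  linarith [Nat.le_ceil x]

section

variable {Ω : Type*} [MeasurableSpace Ω] {μ : Measure Ω}

lemma hasSubgaussianMGF_sub_integral_of_abs_le [IsProbabilityMeasure μ] {X : Ω → ℝ} {b : ℝ}
    (hX : AEMeasurable X μ) (hb : ∀ᵐ ω ∂μ, |X ω| ≤ b) :
    HasSubgaussianMGF (fun ω ↦ X ω - μ[X]) (‖b‖₊ ^ 2) μ := by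
  have h := hasSubgaussianMGF_of_mem_Icc hX (hb.mono fun ω h ↦ abs_le.mp h)
  convert h using 2
  rw [sub_neg_eq_add, ← two_mul, nnnorm_mul]
  simp

lemma measureReal_le_abs_sum_le {ι : Type*} {X : ι → Ω → ℝ} (hindep : iIndepFun X μ)
    {c : ℝ≥0} {s : Finset ι} (hX : ∀ i ∈ s, HasSubgaussianMGF (X i) c μ) {ε : ℝ} (hε : 0 ≤ ε) :
    μ.real {ω | ε ≤ |∑ i ∈ s, X i ω|} ≤ 2 * exp (-ε ^ 2 / (2 * s.card * c)) := by
  have : IsProbabilityMeasure μ := hindep.isProbabilityMeasure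
  have hneg : iIndepFun (fun i ω ↦ -X i ω) μ := hindep.comp (fun _ ↦ Neg.neg) fun _ ↦ measurable_neg
  have hsplit : {ω | ε ≤ |∑ i ∈ s, X i ω|} ⊆
      {ω | ε ≤ ∑ i ∈ s, X i ω} ∪ {ω | ε ≤ ∑ i ∈ s, -X i ω} := by
    intro ω (hω : ε ≤ _)
    show ε ≤ _ ∨ ε ≤ _
    rw [Finset.sum_neg_distrib]
    exact le_abs.mp hω
  have hupper := HasSubgaussianMGF.measure_sum_ge_le_of_iIndepFun hindep hX hε
  have hlower := HasSubgaussianMGF.measure_sum_ge_le_of_iIndepFun hneg (fun i hi ↦ (hX i hi).neg) hε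
  simp only [Finset.sum_const, nsmul_eq_mul, NNReal.coe_mul, NNReal.coe_natCast, ← mul_assoc]
    at hupper hlower
  calc μ.real {ω | ε ≤ |∑ i ∈ s, X i ω|}
      ≤ μ.real {ω | ε ≤ ∑ i ∈ s, X i ω} + μ.real {ω | ε ≤ ∑ i ∈ s, -X i ω} :=
        (measureReal_mono hsplit).trans (measureReal_union_le _ _)
    _ ≤ 2 * exp (-ε ^ 2 / (2 * s.card * c)) := by
        rw [two_mul]; gcongr

lemma measureReal_lt_abs_mean_sub_le [IsProbabilityMeasure μ] {ι : Type*} {r : ι → Ω → ℝ}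
    (hindep : iIndepFun r μ) {s : Finset ι} (hs : s.Nonempty)
    (hmeas : ∀ i ∈ s, AEMeasurable (r i) μ) {R b ε : ℝ} (hmean : ∀ i ∈ s, ∫ ω, r i ω ∂μ = R)
    (hbdd : ∀ i ∈ s, ∀ᵐ ω ∂μ, |r i ω| ≤ b) (hε : 0 ≤ ε) :
    μ.real {ω | ε < |(s.card : ℝ)⁻¹ * ∑ i ∈ s, r i ω - R|} ≤
      2 * exp (-(s.card * ε ^ 2) / (2 * b ^ 2)) := by
  have hn : (0 : ℝ) < s.card := by simpa using hs.card_pos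
  have hcentered : iIndepFun (fun i ω ↦ r i ω - ∫ ω, r i ω ∂μ) μ :=
    hindep.comp (fun i (x : ℝ) ↦ x - ∫ ω, r i ω ∂μ) fun _ ↦ measurable_id.sub_const _
  have hdev : ∀ ω, ε < |(s.card : ℝ)⁻¹ * ∑ i ∈ s, r i ω - R| →
      s.card * ε ≤ |∑ i ∈ s, (r i ω - ∫ ω, r i ω ∂μ)| := by
    intro ω hω
    have hsum : ∑ i ∈ s, (r i ω - ∫ ω, r i ω ∂μ) =
        s.card * ((s.card : ℝ)⁻¹ * ∑ i ∈ s, r i ω - R) := by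
      rw [Finset.sum_sub_distrib, Finset.sum_congr rfl hmean, Finset.sum_const, nsmul_eq_mul]
      field_simp
    rw [hsum, abs_mul, abs_of_pos hn]
    exact mul_le_mul_of_nonneg_left hω.le hn.le
  have hoeffding := measureReal_le_abs_sum_le hcentered
    (fun i hi ↦ hasSubgaussianMGF_sub_integral_of_abs_le (hmeas i hi) (hbdd i hi))
    (mul_nonneg hn.le hε)
  refine (measureReal_mono fun ω ↦ hdev ω).trans (hoeffding.trans_eq ?_)
  push_cast
  rw [Real.norm_eq_abs, sq_abs]
  field_simp

lemma measureReal_setOf_mem_le_sum [IsFiniteMeasure μ] {ι : Type*} {A : Ω → ι} {s : Finset ι}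
    (hA : ∀ᵐ ω ∂μ, A ω ∈ s) (E : ι → Set Ω) :
    μ.real {ω | ω ∈ E (A ω)} ≤ ∑ i ∈ s, μ.real (E i) := by
  refine le_trans ?_ (measureReal_biUnion_finset_le s E)
  refine ENNReal.toReal_mono (measure_ne_top μ _) (measure_mono_ae ?_)
  filter_upwards [hA] with ω hω hE using Set.mem_biUnion hω hE

end

theorem stmt_12_general {Ω : Type*} [MeasurableSpace Ω] (μ : Measure Ω) [IsProbabilityMeasure μ]
    (r : ℕ → Ω → ℝ) (R Rmax : ℝ)
    (hmeas : ∀ i, Measurable (r i))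
    (hindep : iIndepFun r μ)
    (hmean : ∀ i, 1 ≤ i → ∫ ω, r i ω ∂μ = R)
    (hbdd : ∀ i, 1 ≤ i → ∀ᵐ ω ∂μ, |r i ω| ≤ Rmax)
    (c : ℝ) (hc1 : c < 1)
    (t : ℕ) (hct : 1 ≤ c * t)
    (ε : ℝ) (hε : 0 < ε)
    (A : Ω → ℕ)
    (hAbdd : ∀ᵐ ω ∂μ, c * t ≤ (A ω : ℝ) ∧ (A ω : ℝ) ≤ t)
    (hlarge : (1 - c) * t + 1 ≤ Real.exp (c * t * ε ^ 2 / (4 * Rmax ^ 2))) :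
    μ {ω | ε < |((A ω : ℝ))⁻¹ * (∑ i ∈ Finset.Icc 1 (A ω), r i ω) - R|} ≤
      ENNReal.ofReal (2 * Real.exp (-(c * t * ε ^ 2) / (4 * Rmax ^ 2))) := by
  set S := Finset.Icc ⌈c * t⌉₊ t
  set E : ℕ → Set Ω := fun m ↦ {ω | ε < |(m : ℝ)⁻¹ * ∑ i ∈ Finset.Icc 1 m, r i ω - R|}
  set K := 2 * exp (-(c * t * ε ^ 2) / (2 * Rmax ^ 2))
  have hAS : ∀ᵐ ω ∂μ, A ω ∈ S := hAbdd.mono fun ω hω ↦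
    Finset.mem_Icc.mpr ⟨Nat.ceil_le.mpr hω.1, by exact_mod_cast hω.2⟩
  have hterm : ∀ m ∈ S, μ.real (E m) ≤ K := by
    intro m hm
    have hcm : c * t ≤ m := Nat.ceil_le.mp (Finset.mem_Icc.mp hm).1
    have hm1 : 1 ≤ m := by exact_mod_cast hct.trans hcm
    have hoeffding := measureReal_lt_abs_mean_sub_le hindep (s := Finset.Icc 1 m)
      ⟨1, Finset.mem_Icc.mpr ⟨le_rfl, hm1⟩⟩ (fun i _ ↦ (hmeas i).aemeasurable)
      (fun i hi ↦ hmean i (Finset.mem_Icc.mp hi).1) (fun i hi ↦ hbdd i (Finset.mem_Icc.mp hi).1)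
      hε.le
    rw [Nat.card_Icc, Nat.add_sub_cancel] at hoeffding
    refine hoeffding.trans ?_
    unfold K
    gcongr
  have hcard : (S.card : ℝ) ≤ (1 - c) * t + 1 := by
    have := card_Icc_natCeil_le (x := c * t) (n := t) (by nlinarith)
    linarith
  rw [← ofReal_measureReal]
  refine ENNReal.ofReal_le_ofReal ?_
  calc μ.real {ω | ω ∈ E (A ω)}
      ≤ ∑ m ∈ S, μ.real (E m) := measureReal_setOf_mem_le_sum hAS E
    _ ≤ S.card * K := by simpa using Finset.sum_le_card_nsmul S _ K hterm
    _ ≤ exp (c * t * ε ^ 2 / (4 * Rmax ^ 2)) * K := by gcongr; exact hcard.trans hlarge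
    _ = 2 * exp (-(c * t * ε ^ 2) / (4 * Rmax ^ 2)) := by
        rw [mul_left_comm, ← exp_add]
        ring_nf

/-- Deviation bound for an empirical mean with a random sample size `A ∈ [c·t, t]`:
Hoeffding's inequality plus a union bound over the possible values of `A` gives
`P(|r̄_A − R| > ε) ≤ 2·exp(−c·t·ε²/(4·R_max²))`, provided the union-bound factor
`(1−c)·t + 1` is absorbed, i.e. `(1−c)·t + 1 ≤ exp(c·t·ε²/(4·R_max²))`. -/
theorem stmt_12 {Ω : Type*} [MeasurableSpace Ω] (μ : Measure Ω) [IsProbabilityMeasure μ]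
    (r : ℕ → Ω → ℝ) (R Rmax : ℝ) (hRmax : 0 < Rmax)
    (hmeas : ∀ i, Measurable (r i))
    (hindep : iIndepFun r μ)
    (hident : ∀ i j, Measure.map (r i) μ = Measure.map (r j) μ)
    (hmean : ∀ i, 1 ≤ i → ∫ ω, r i ω ∂μ = R)
    (hbdd : ∀ i, 1 ≤ i → ∀ᵐ ω ∂μ, |r i ω| ≤ Rmax)
    (c : ℝ) (hc0 : 0 < c) (hc1 : c < 1)
    (t : ℕ) (ht : 1 ≤ t) (hct : 1 ≤ c * t)
    (ε : ℝ) (hε : 0 < ε)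
    (A : Ω → ℕ) (hA : Measurable A)
    (hAbdd : ∀ᵐ ω ∂μ, c * t ≤ (A ω : ℝ) ∧ (A ω : ℝ) ≤ t)
    (hlarge : (1 - c) * t + 1 ≤ Real.exp (c * t * ε ^ 2 / (4 * Rmax ^ 2))) :
    μ {ω | ε < |((A ω : ℝ))⁻¹ * (∑ i ∈ Finset.Icc 1 (A ω), r i ω) - R|} ≤
      ENNReal.ofReal (2 * Real.exp (-(c * t * ε ^ 2) / (4 * Rmax ^ 2))) :=
  stmt_12_general μ r R Rmax hmeas hindep hmean hbdd c hc1 t hct ε hε A hAbdd hlarge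
end
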